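/- arXiv:2509.18580 — 2 statements merged into one kernel-verified Lean document; each statement's English description precedes it below -/
import Mathlib

section
/- For any $\phi \in \mathbb{R}$ and integer $b \ge 1$ with $\kappa = a - b/2$, the logistic kernel admits the representation $\frac{(e^\phi)^a}{(1+e^\phi)^b} = 2^{-b} e^{\kappa\phi} \mathbb{E}\big[e^{-\tau\phi^2/2}\big]$ where $\tau \sim \mathrm{PG}(b,0)$; in the special case $b=1$, $a \in \{0,1\}$, this reads $\frac{e^{a\phi}}{1+e^\phi} = \tfrac12 e^{(a-1/2)\phi}\,\mathbb{E}[e^{-\tau\phi^2/2}]$, using that the Laplace transform of $\tau \sim \mathrm{PG}(1,0)$ is $\mathbb{E}[e^{-\tau t}] = \cosh^{-1}(\sqrt{t/2}) = 1/\cosh(\sqrt{t/2})$. -/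
/-!
Since `1 + e^φ = 2 e^{φ/2} cosh(φ/2)`, the kernel equals `2⁻ᵇ e^{κφ} cosh(φ/2)⁻ᵇ`, and
`cosh(φ/2)⁻ᵇ` is the Pólya-Gamma Laplace transform at `t = φ²/2`.
-/

open MeasureTheory

namespace Real

theorem one_add_exp_eq_two_mul_exp_half_mul_cosh (φ : ℝ) :
    1 + exp φ = 2 * exp (φ / 2) * cosh (φ / 2) := by
  calc 1 + exp φ = exp (φ / 2) * exp (φ / 2) + exp (φ / 2) * exp (-(φ / 2)) := by
        rw [← exp_add, ← exp_add, add_halves, add_neg_cancel, exp_zero, add_comm]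
    _ = 2 * exp (φ / 2) * cosh (φ / 2) := by rw [cosh_eq]; ring

theorem cosh_sqrt_sq_div_four (φ : ℝ) : cosh (√(φ ^ 2 / 2 / 2)) = cosh (φ / 2) := by
  rw [show φ ^ 2 / 2 / 2 = (φ / 2) ^ 2 by ring, sqrt_sq_eq_abs, cosh_abs]

theorem exp_rpow_div_one_add_exp_pow (a φ : ℝ) (b : ℕ) :
    exp φ ^ a / (1 + exp φ) ^ b
      = 2⁻¹ ^ b * exp ((a - b / 2) * φ) * (cosh (φ / 2))⁻¹ ^ b := by
  have hsplit : exp φ ^ a = exp ((a - b / 2) * φ) * exp (φ / 2) ^ b := by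
    rw [← exp_mul, ← exp_nat_mul, ← exp_add]
    ring_nf
  rw [one_add_exp_eq_two_mul_exp_half_mul_cosh, hsplit, mul_pow, mul_pow,
    inv_pow, inv_pow]
  field_simp [(exp_pos (φ / 2)).ne', (cosh_pos (φ / 2)).ne']

end Real

theorem stmt_10_general (b : ℕ) (a : ℝ)
    (μ : Measure ℝ)
    (hLaplace : ∀ t : ℝ, 0 ≤ t →
      (∫ τ, Real.exp (-τ * t) ∂μ) = (Real.cosh (Real.sqrt (t / 2)))⁻¹ ^ b)
    (φ : ℝ) :
    (Real.exp φ) ^ a / (1 + Real.exp φ) ^ b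
      = 2⁻¹ ^ b * Real.exp ((a - (b : ℝ) / 2) * φ) *
          ∫ τ, Real.exp (-τ * φ ^ 2 / 2) ∂μ := by
  have hPG : ∫ τ, Real.exp (-τ * φ ^ 2 / 2) ∂μ = (Real.cosh (φ / 2))⁻¹ ^ b := by
    simp_rw [mul_div_assoc]
    rw [hLaplace _ (by positivity), Real.cosh_sqrt_sq_div_four]
  rw [hPG, Real.exp_rpow_div_one_add_exp_pow]

/-- Pólya-Gamma representation of the logistic kernel: if `τ ~ PG(b,0)`, i.e.
`E[exp(-τ t)] = cosh(√(t/2))⁻ᵇ`, then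
`(e^φ)^a / (1+e^φ)^b = 2⁻ᵇ e^{κφ} E[exp(-τ φ²/2)]` with `κ = a - b/2`. -/
theorem stmt_10 (b : ℕ) (hb : 1 ≤ b) (a : ℝ)
    (μ : Measure ℝ) [IsProbabilityMeasure μ]
    (hLaplace : ∀ t : ℝ, 0 ≤ t →
      (∫ τ, Real.exp (-τ * t) ∂μ) = (Real.cosh (Real.sqrt (t / 2)))⁻¹ ^ b)
    (φ : ℝ) :
    (Real.exp φ) ^ a / (1 + Real.exp φ) ^ b
      = 2⁻¹ ^ b * Real.exp ((a - (b : ℝ) / 2) * φ) *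
          ∫ τ, Real.exp (-τ * φ ^ 2 / 2) ∂μ :=
  stmt_10_general b a μ hLaplace φ
end

section
/- Let $P$ and $Q$ be the Bernoulli distributions with success probabilities $p, q \in (0,1)$ respectively, parameterized by logits $\theta_p = \mathrm{logit}(p)$ and $\theta_q = \mathrm{logit}(q)$, so that $p, q$ are obtained from the logits via the logistic function. Then the squared Hellinger distance $H^2(P,Q) = (\sqrt{p}-\sqrt{q})^2 + (\sqrt{1-p}-\sqrt{1-q})^2$ satisfies $H^2(P,Q) \le \tfrac{1}{8}(\theta_p-\theta_q)^2$. -/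
noncomputable def sigf (θ : ℝ) : ℝ := Real.sqrt (Real.exp θ / (1 + Real.exp θ))

lemma sig_pos (θ : ℝ) : 0 < Real.exp θ / (1 + Real.exp θ) :=
  div_pos (Real.exp_pos θ) (by positivity)

lemma hasderiv_sig (θ : ℝ) :
    HasDerivAt (fun t => Real.exp t / (1 + Real.exp t))
      (Real.exp θ / (1 + Real.exp θ) ^ 2) θ := by
  have h1 : HasDerivAt Real.exp (Real.exp θ) θ := Real.hasDerivAt_exp θ
  have h2 : HasDerivAt (fun t => 1 + Real.exp t) (Real.exp θ) θ := by
    exact h1.const_add 1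
  have h3 : HasDerivAt (fun t => Real.exp t / (1 + Real.exp t)) _ θ := h1.div h2 (by positivity)
  convert h3 using 1
  have : (0:ℝ) < 1 + Real.exp θ := by positivity
  field_simp
  ring

lemma hasderiv_sigf (θ : ℝ) :
    HasDerivAt sigf
      (Real.exp θ / (1 + Real.exp θ) ^ 2 / (2 * Real.sqrt (Real.exp θ / (1 + Real.exp θ)))) θ :=
  (hasderiv_sig θ).sqrt (ne_of_gt (sig_pos θ))

lemma deriv_sigf_bound (θ : ℝ) : ‖deriv sigf θ‖ ≤ 1 / 4 := by
  rw [(hasderiv_sigf θ).deriv]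
  set u : ℝ := Real.exp θ / (1 + Real.exp θ) with hu
  have hu0 : 0 < u := sig_pos θ
  have hu1 : u < 1 := by
    rw [hu, div_lt_one (by positivity)]
    linarith [Real.exp_pos θ]
  set s : ℝ := Real.sqrt u with hs
  have hs0 : 0 < s := Real.sqrt_pos.mpr hu0
  have hs2 : s ^ 2 = u := Real.sq_sqrt hu0.le
  have hs1 : s < 1 := by
    nlinarith
  have hkey : Real.exp θ / (1 + Real.exp θ) ^ 2 = u * (1 - u) := by
    rw [hu]
    have : (0:ℝ) < 1 + Real.exp θ := by positivity
    field_simp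
    ring
  rw [hkey, Real.norm_eq_abs, abs_of_nonneg
    (div_nonneg (mul_nonneg hu0.le (by linarith)) (by positivity))]
  rw [div_le_iff₀ (by positivity)]
  -- u*(1-u) ≤ 1/4 * (2*s) means s²(1-s²) ≤ s/2, i.e. s(1-s²) ≤ 1/2
  nlinarith [sq_nonneg (s - 1), sq_nonneg (2*s - 1), sq_nonneg s]

lemma lip_sigf : LipschitzWith (4⁻¹ : NNReal) sigf := by
  apply lipschitzWith_of_nnnorm_deriv_le
  · intro x
    exact (hasderiv_sigf x).differentiableAt
  · intro x
    have h := deriv_sigf_bound x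
    rw [← NNReal.coe_le_coe, coe_nnnorm]
    simpa using h

lemma sq_diff_bound (a b : ℝ) : (sigf a - sigf b) ^ 2 ≤ (1/16) * (a - b) ^ 2 := by
  have h := lip_sigf.dist_le_mul a b
  rw [Real.dist_eq, Real.dist_eq] at h
  have h' : |sigf a - sigf b| ≤ (1/4) * |a - b| := by
    convert h using 2
    norm_num
  nlinarith [abs_nonneg (sigf a - sigf b), abs_nonneg (a - b), sq_abs (sigf a - sigf b),
    sq_abs (a - b)]

lemma one_sub_sig (θ : ℝ) :
    1 - Real.exp θ / (1 + Real.exp θ) = Real.exp (-θ) / (1 + Real.exp (-θ)) := by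
  rw [Real.exp_neg]
  have h1 : (0:ℝ) < 1 + Real.exp θ := by positivity
  have h2 : (0:ℝ) < 1 + (Real.exp θ)⁻¹ := by positivity
  have h3 := Real.exp_pos θ
  field_simp
  ring

/-- Hellinger–logit bound for Bernoulli distributions parameterized by the
logistic link: `H²(Ber(p), Ber(q)) ≤ (θ_p - θ_q)²/8`. -/
theorem stmt_17 (θp θq p q : ℝ)
    (hp : p = Real.exp θp / (1 + Real.exp θp))
    (hq : q = Real.exp θq / (1 + Real.exp θq)) :
    (Real.sqrt p - Real.sqrt q) ^ 2 + (Real.sqrt (1 - p) - Real.sqrt (1 - q)) ^ 2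
      ≤ (1 / 8) * (θp - θq) ^ 2 := by
  have hp1 : Real.sqrt p = sigf θp := by rw [hp]; rfl
  have hq1 : Real.sqrt q = sigf θq := by rw [hq]; rfl
  have hp2 : Real.sqrt (1 - p) = sigf (-θp) := by
    rw [hp, one_sub_sig]; rfl
  have hq2 : Real.sqrt (1 - q) = sigf (-θq) := by
    rw [hq, one_sub_sig]; rfl
  rw [hp1, hq1, hp2, hq2]
  have h1 := sq_diff_bound θp θq
  have h2 := sq_diff_bound (-θp) (-θq)
  have : (-θp - -θq) ^ 2 = (θp - θq) ^ 2 := by ring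
  rw [this] at h2
  linarith
end
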